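/- Let p = 1 or let p be an odd prime, and write (q;q)_∞² / ((q²;q²)_∞ (q^{4p};q^{4p})_∞) = Σ_{n=0}^∞ a_n q^n. Define N = max over those residues s ∈ {0,…,4p−1} attained by some r² mod 4p of min{ r² : 0 ≤ r ≤ 4p−1, r² ≡ s (mod 4p) }, minus 4p. Then for all n > N: a_n < 0 if n ≡ 4t²+4t+1 (mod 4p) for some t ∈ ℤ/pℤ; a_n > 0 if n ≡ 4t² (mod 4p) for some t ∈ ℤ/pℤ; and a_n = 0 otherwise (i.e., when n ≡ 2 or 3 (mod 4), or when p is an odd prime and n is a quadratic nonresidue mod p). -/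

import Mathlib

open PowerSeries

/-- Coefficientwise (product) topology on `ℤ⟦X⟧`, so that infinite products of
power series make sense via `tprod`. -/
noncomputable instance : TopologicalSpace (PowerSeries ℤ) :=
  TopologicalSpace.induced (fun f => fun n => (PowerSeries.coeff n) f) inferInstance

/-- `(q^j; q^M)_∞ = ∏_{n=0}^∞ (1 - q^{j + M n})` as a formal power series over `ℤ`. -/
noncomputable def qPoch (j M : ℕ) : PowerSeries ℤ :=
  ∏' n : ℕ, (1 - (X : PowerSeries ℤ) ^ (j + M * n))

/-- `(q^k; q^k)_∞ = ∏_{n=1}^∞ (1 - q^{k n})` as a formal power series over `ℤ`. -/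
noncomputable def E (k : ℕ) : PowerSeries ℤ :=
  ∏' n : ℕ, (1 - (X : PowerSeries ℤ) ^ (k * (n + 1)))

open Finset

/-! ### Part I: topology and truncation of infinite products -/

lemma coeffs_embedding : Topology.IsEmbedding (fun (f : PowerSeries ℤ) => fun n => (PowerSeries.coeff n) f) := by
  refine ⟨⟨rfl⟩, ?_⟩
  intro f g h
  ext n
  exact congrFun h n

instance : T2Space (PowerSeries ℤ) := coeffs_embedding.t2Space

lemma prod_one_dvd (M : ℕ) (f : ℕ → PowerSeries ℤ) (S : Finset ℕ)
    (h : ∀ i ∈ S, (X : PowerSeries ℤ)^M ∣ (f i - 1)) :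
    (X : PowerSeries ℤ)^M ∣ (∏ i ∈ S, f i) - 1 := by
  classical
  induction S using Finset.induction with
  | empty => simp
  | @insert a s hnot ih =>
    rw [Finset.prod_insert hnot]
    have h1 : (X : PowerSeries ℤ)^M ∣ (f a - 1) := h a (Finset.mem_insert_self a s)
    have h2 := ih (fun i hi => h i (Finset.mem_insert_of_mem hi))
    have e : f a * ∏ i ∈ s, f i - 1 = f a * ((∏ i ∈ s, f i) - 1) + (f a - 1) := by ring
    rw [e]
    exact dvd_add (Dvd.dvd.mul_left h2 _) h1

lemma coeff_eq_of_dvd {M n : ℕ} (hn : n < M) {A B : PowerSeries ℤ}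
    (h : (X : PowerSeries ℤ)^M ∣ (A - B)) : coeff n A = coeff n B := by
  rw [X_pow_dvd_iff] at h
  have := h n hn
  rw [map_sub] at this
  linarith

lemma coeff_prod_of_subset (f : ℕ → PowerSeries ℤ)
    (h : ∀ i, (X : PowerSeries ℤ)^(i+1) ∣ (f i - 1)) (n : ℕ) (S : Finset ℕ)
    (hS : range (n+1) ⊆ S) :
    coeff n (∏ i ∈ S, f i) = coeff n (∏ i ∈ range (n+1), f i) := by
  have e : ∏ i ∈ S, f i = (∏ i ∈ range (n+1), f i) * ∏ i ∈ S \ range (n+1), f i := by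
    rw [← Finset.prod_union (Finset.disjoint_sdiff)]
    congr 1
    rw [Finset.union_sdiff_of_subset hS]
  rw [e]
  have hdvd : (X : PowerSeries ℤ)^(n+1) ∣ (∏ i ∈ S \ range (n+1), f i) - 1 := by
    apply prod_one_dvd
    intro i hi
    have hi' : n + 1 ≤ i + 1 := by
      have := (Finset.mem_sdiff.mp hi).2
      simp only [Finset.mem_range, not_lt] at this
      omega
    exact dvd_trans (pow_dvd_pow _ hi') (h i)
  have hd : (X : PowerSeries ℤ)^(n+1) ∣
      ((∏ i ∈ range (n+1), f i) * (∏ i ∈ S \ range (n+1), f i) - ∏ i ∈ range (n+1), f i) := by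
    have e2 : (∏ i ∈ range (n+1), f i) * (∏ i ∈ S \ range (n+1), f i) - (∏ i ∈ range (n+1), f i)
        = (∏ i ∈ range (n+1), f i) * ((∏ i ∈ S \ range (n+1), f i) - 1) := by ring
    rw [e2]
    exact Dvd.dvd.mul_left hdvd _
  exact coeff_eq_of_dvd (Nat.lt_succ_self n) hd

lemma hasProd_of_dvd (f : ℕ → PowerSeries ℤ)
    (h : ∀ i, (X : PowerSeries ℤ)^(i+1) ∣ (f i - 1)) :
    HasProd f (PowerSeries.mk (fun n => coeff n (∏ i ∈ range (n+1), f i))) := by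
  classical
  set L := PowerSeries.mk (fun n => coeff n (∏ i ∈ range (n+1), f i)) with hL
  rw [HasProd, nhds_induced (fun f => fun n => (PowerSeries.coeff n) f) L,
    Filter.tendsto_comap_iff]
  rw [tendsto_pi_nhds]
  intro n
  apply Filter.Tendsto.congr' _ tendsto_const_nhds
  filter_upwards [Filter.eventually_ge_atTop (range (n+1))] with S hS
  have := coeff_prod_of_subset f h n S hS
  simp only [Function.comp_apply, hL, coeff_mk]
  exact this.symm

lemma coeff_tprod_eq (f : ℕ → PowerSeries ℤ)
    (h : ∀ i, (X : PowerSeries ℤ)^(i+1) ∣ (f i - 1)) (n m : ℕ) (hm : n < m) :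
    coeff n (∏' i, f i) = coeff n (∏ i ∈ range m, f i) := by
  rw [(hasProd_of_dvd f h).tprod_eq, coeff_mk]
  rw [coeff_prod_of_subset f h n (range m) (by intro x hx; simp only [Finset.mem_range] at *; omega)]

lemma X_pow_dvd_tprod (f : ℕ → PowerSeries ℤ)
    (h : ∀ i, (X : PowerSeries ℤ)^(i+1) ∣ (f i - 1)) (m : ℕ) :
    (X : PowerSeries ℤ)^m ∣ (∏' i, f i) - ∏ i ∈ range m, f i := by
  rw [X_pow_dvd_iff]
  intro n hn
  rw [map_sub, coeff_tprod_eq f h n m hn, sub_self]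

lemma coeff_mul_congr {A A' B B' : PowerSeries ℤ} (M : ℕ)
    (hA : (X : PowerSeries ℤ)^M ∣ A - A') (hB : (X : PowerSeries ℤ)^M ∣ B - B') :
    (X : PowerSeries ℤ)^M ∣ A*B - A'*B' := by
  have e : A*B - A'*B' = (A - A')*B + A'*(B - B') := by ring
  rw [e]
  exact dvd_add (hA.mul_right _) (hB.mul_left _)

noncomputable def GB : ℕ → ℕ → PowerSeries ℤ
  | _, 0 => 1
  | 0, _+1 => 0
  | N+1, K+1 => GB N K + X^(2*(K+1)) * GB N (K+1)

@[simp] lemma GB_zero_right (N : ℕ) : GB N 0 = 1 := by cases N <;> rfl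
@[simp] lemma GB_zero_succ (K : ℕ) : GB 0 (K+1) = 0 := rfl
lemma GB_succ_succ (N K : ℕ) : GB (N+1) (K+1) = GB N K + X^(2*(K+1)) * GB N (K+1) := rfl

lemma GB_eq_zero : ∀ {N K : ℕ}, N < K → GB N K = 0 := by
  intro N
  induction N with
  | zero => intro K h; match K, h with | (K+1), _ => rfl
  | succ n ih =>
    intro K h
    match K, h with
    | (K+1), h =>
      rw [GB_succ_succ, ih (by omega), ih (by omega)]
      simp

@[simp] lemma GB_diag : ∀ N : ℕ, GB N N = 1 := by
  intro N
  induction N with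
  | zero => rfl
  | succ n ih => rw [GB_succ_succ, ih, GB_eq_zero (by omega)]; simp

lemma GB_pascal2 : ∀ N K : ℕ, GB (N+1) (K+1) = X^(2*(N-K)) * GB N K + GB N (K+1) := by
  intro N
  induction N with
  | zero =>
    intro K
    cases K with
    | zero => simp [GB_succ_succ]
    | succ k => rw [GB_succ_succ]; simp [GB_eq_zero (show 0 < k+1 by omega)]
  | succ n ih =>
    intro K
    cases K with
    | zero =>
      rw [GB_succ_succ]
      conv_lhs => rw [ih 0]
      conv_rhs => rw [GB_succ_succ]
      simp only [GB_zero_right, mul_one, Nat.sub_zero]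
      ring
    | succ k =>
      rw [GB_succ_succ]
      conv_lhs => rw [ih k, ih (k+1)]
      conv_rhs => rw [GB_succ_succ, GB_succ_succ]
      have key : X^(2*(k+1+1)) * (X^(2*(n-(k+1))) * GB n (k+1))
          = X^(2*((n+1)-(k+1))) * (X^(2*(k+1)) * GB n (k+1)) := by
        rcases le_or_gt (k+1) n with h | h
        · rw [← mul_assoc, ← mul_assoc, ← pow_add, ← pow_add]
          congr 2
          omega
        · rw [GB_eq_zero h]; ring
      calc X ^ (2 * (n - k)) * GB n k + GB n (k + 1) +
            X ^ (2 * (k + 1 + 1)) * (X ^ (2 * (n - (k + 1))) * GB n (k + 1) + GB n (k + 1 + 1))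
          = (X ^ (2 * (n - k)) * GB n k + GB n (k + 1) +
              X ^ (2 * (k + 1 + 1)) * GB n (k + 1 + 1)) +
            X^(2*(k+1+1)) * (X^(2*(n-(k+1))) * GB n (k+1)) := by ring
        _ = (X ^ (2 * (n - k)) * GB n k + GB n (k + 1) +
              X ^ (2 * (k + 1 + 1)) * GB n (k + 1 + 1)) +
            X^(2*((n+1)-(k+1))) * (X^(2*(k+1)) * GB n (k+1)) := by rw [key]
        _ = X ^ (2 * (n + 1 - (k + 1))) * (GB n k + X ^ (2 * (k + 1)) * GB n (k + 1)) +
            (GB n (k + 1) + X ^ (2 * (k + 1 + 1)) * GB n (k + 1 + 1)) := by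
            have : n + 1 - (k+1) = n - k := by omega
            rw [this]; ring

lemma GB_symm : ∀ N K : ℕ, K ≤ N → GB N K = GB N (N - K) := by
  intro N
  induction N with
  | zero => intro K h; interval_cases K; rfl
  | succ n ih =>
    intro K h
    cases K with
    | zero => simp
    | succ k =>
      rcases Nat.eq_or_lt_of_le h with he | hlt
      · rw [← he]; simp
      · have hk : k ≤ n := by omega
        have hk2 : n + 1 - (k+1) = (n - k - 1) + 1 ∨ n + 1 - (k+1) = n - k := by omega
        have hnk : n + 1 - (k + 1) = n - k := by omega
        rw [GB_succ_succ, hnk]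
        have hkn : k + 1 ≤ n := by omega
        have h1 : n - k = (n - (k+1)) + 1 := by omega
        rw [h1, GB_pascal2]
        have e1 : n - (n - (k+1)) = k + 1 := by omega
        rw [e1, ← ih (k+1) hkn, ← h1, ← ih k hk]
        ring

lemma GB_expand (N j : ℕ) :
    GB (N+1) j = GB N j + X^(2*(N+1-j)) * (if j = 0 then 0 else GB N (j-1)) := by
  cases j with
  | zero => simp
  | succ k =>
    simp only [Nat.succ_ne_zero, if_false, Nat.add_sub_cancel]
    rw [GB_pascal2]
    rcases le_or_gt k N with h | h
    · have : N + 1 - (k+1) = N - k := by omega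
      rw [this]; ring
    · rw [GB_eq_zero h, GB_eq_zero (by omega : N < k + 1)]
      simp

lemma GB_vandermonde : ∀ (N M K : ℕ), GB (M + N) K =
    ∑ p ∈ Finset.HasAntidiagonal.antidiagonal K, X^(2*(M - p.1)*p.2) * GB M p.1 * GB N p.2 := by
  intro N
  induction N with
  | zero =>
    intro M K
    rw [Finset.sum_eq_single (K, 0)]
    · simp
    · rintro ⟨i, j⟩ hb hne
      have hij : i + j = K := Finset.HasAntidiagonal.mem_antidiagonal.mp hb
      have hj : j ≠ 0 := by rintro rfl; exact hne (by simp [← hij])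
      obtain ⟨j', rfl⟩ := Nat.exists_eq_succ_of_ne_zero hj
      simp [GB_zero_succ]
    · intro h
      exact absurd (Finset.HasAntidiagonal.mem_antidiagonal.mpr (by simp)) h
  | succ N ih =>
    intro M K
    have expand : ∀ p ∈ Finset.HasAntidiagonal.antidiagonal K,
        X^(2*(M - p.1)*p.2) * GB M p.1 * GB (N+1) p.2 =
        X^(2*(M - p.1)*p.2) * GB M p.1 * GB N p.2 +
        X^(2*(M - p.1)*p.2) * GB M p.1 *
          (X^(2*(N+1-p.2)) * (if p.2 = 0 then 0 else GB N (p.2 - 1))) := by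
      intro p _
      rw [GB_expand N p.2]
      ring
    rw [Finset.sum_congr rfl expand, Finset.sum_add_distrib, ← ih M K]
    cases K with
    | zero =>
      simp
    | succ K' =>
      rw [Finset.Nat.sum_antidiagonal_succ']
      simp only [if_true, mul_zero, zero_add]
      have : ∀ p ∈ Finset.HasAntidiagonal.antidiagonal K',
          X^(2*(M - p.1)*(p.2+1)) * GB M p.1 *
            (X^(2*(N+1-(p.2+1))) * (if p.2 + 1 = 0 then 0 else GB N (p.2 + 1 - 1))) =
          X^(2*(M+N-K')) * (X^(2*(M - p.1)*p.2) * GB M p.1 * GB N p.2) := by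
        rintro ⟨i, j⟩ hb
        have hij : i + j = K' := Finset.HasAntidiagonal.mem_antidiagonal.mp hb
        simp only [Nat.succ_ne_zero, if_false, Nat.add_sub_cancel]
        rcases le_or_gt i M with hiM | hiM
        · rcases le_or_gt j N with hjN | hjN
          · obtain ⟨c, rfl⟩ := Nat.exists_eq_add_of_le hiM
            obtain ⟨d, rfl⟩ := Nat.exists_eq_add_of_le hjN
            have e1 : i + c - i = c := by omega
            have e2 : j + d + 1 - (j + 1) = d := by omega
            have e3 : i + c + (j + d) - K' = c + d := by omega
            simp only [e1, e2, e3]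
            ring
          · rw [GB_eq_zero hjN]; ring
        · rw [GB_eq_zero hiM]; ring
      rw [Finset.sum_congr rfl this, ← Finset.mul_sum, ← ih M K']
      have hMN : M + (N+1) = (M+N)+1 := by omega
      rw [hMN, GB_pascal2]
      ring

noncomputable def Wm (m : ℕ) : PowerSeries ℤ := ∏ i ∈ range m, (1 - X^(2*i+1))

lemma gauss_W : ∀ m : ℕ, Wm m = ∑ k ∈ range (m+1), (-1 : PowerSeries ℤ)^k * X^(k^2) * GB m k := by
  intro m
  induction m with
  | zero => simp [Wm]
  | succ m ih =>
    have expand : ∀ k ∈ range (m+2),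
        (-1 : PowerSeries ℤ)^k * X^(k^2) * GB (m+1) k =
        (-1 : PowerSeries ℤ)^k * X^(k^2) * GB m k +
        (-1 : PowerSeries ℤ)^k * X^(k^2) * (X^(2*(m+1-k)) * (if k = 0 then 0 else GB m (k-1))) := by
      intro k _
      rw [GB_expand m k]; ring
    rw [Finset.sum_congr rfl expand, Finset.sum_add_distrib]
    have hA : ∑ k ∈ range (m+2), (-1 : PowerSeries ℤ)^k * X^(k^2) * GB m k
        = ∑ k ∈ range (m+1), (-1 : PowerSeries ℤ)^k * X^(k^2) * GB m k := by
      rw [Finset.sum_range_succ, GB_eq_zero (by omega : m < m+1)]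
      simp
    have hB : ∑ k ∈ range (m+2),
        (-1 : PowerSeries ℤ)^k * X^(k^2) * (X^(2*(m+1-k)) * (if k = 0 then 0 else GB m (k-1)))
        = -X^(2*m+1) * ∑ k ∈ range (m+1), (-1 : PowerSeries ℤ)^k * X^(k^2) * GB m k := by
      rw [Finset.sum_range_succ']
      simp only [if_true, mul_zero, pow_zero, one_mul, add_zero, Nat.succ_ne_zero, if_false,
        Nat.add_sub_cancel]
      rw [Finset.mul_sum]
      apply Finset.sum_congr rfl
      intro k hk
      have hkm : k ≤ m := by simpa using Nat.lt_succ_iff.mp (Finset.mem_range.mp hk)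
      obtain ⟨d, rfl⟩ := Nat.exists_eq_add_of_le hkm
      have e1 : k + d + 1 - (k+1) = d := by omega
      rw [e1]
      have e2 : (k+1)^2 + 2*d = k^2 + (2*(k+d)+1) := by ring
      calc (-1 : PowerSeries ℤ)^(k+1) * X^((k+1)^2) * (X^(2*d) * GB (k+d) k)
          = -((-1 : PowerSeries ℤ)^k * X^((k+1)^2 + 2*d) * GB (k+d) k) := by
            rw [pow_succ, pow_add]; ring
        _ = -X^(2*(k+d)+1) * ((-1 : PowerSeries ℤ)^k * X^(k^2) * GB (k+d) k) := by
            rw [e2, pow_add]; ring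
    rw [hA, hB, Wm, Finset.prod_range_succ, ← Wm, ih]
    ring

noncomputable def Sm (m : ℕ) : PowerSeries ℤ :=
  ∑ k ∈ range (2*m+1), (-1 : PowerSeries ℤ)^(k+m) * X^((k-m)^2 + (m-k)^2) * GB (2*m) k

lemma jtp (m : ℕ) : (Wm m)^2 = Sm m := by
  classical
  rw [sq, gauss_W, Finset.sum_mul_sum]
  rw [← Finset.sum_product']
  have hS : Sm m = ∑ x ∈ (range (2*m+1)).sigma (fun k => Finset.HasAntidiagonal.antidiagonal k),
      (-1 : PowerSeries ℤ)^(x.1+m) * X^((x.1-m)^2 + (m-x.1)^2) *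
        (X^(2*(m - x.2.1)*x.2.2) * GB m x.2.1 * GB m x.2.2) := by
    rw [Finset.sum_sigma]
    apply Finset.sum_congr rfl
    intro k _
    have h2m : 2*m = m + m := by omega
    have hv := GB_vandermonde m m k
    rw [← h2m] at hv
    rw [hv, Finset.mul_sum]
  rw [hS]
  set T := ((range (2*m+1)).sigma (fun k => Finset.HasAntidiagonal.antidiagonal k)).filter
      (fun x => x.2.1 ≤ m ∧ x.2.2 ≤ m) with hT
  have hfil : ∑ x ∈ (range (2*m+1)).sigma (fun k => Finset.HasAntidiagonal.antidiagonal k),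
      (-1 : PowerSeries ℤ)^(x.1+m) * X^((x.1-m)^2 + (m-x.1)^2) *
        (X^(2*(m - x.2.1)*x.2.2) * GB m x.2.1 * GB m x.2.2)
      = ∑ x ∈ T,
      (-1 : PowerSeries ℤ)^(x.1+m) * X^((x.1-m)^2 + (m-x.1)^2) *
        (X^(2*(m - x.2.1)*x.2.2) * GB m x.2.1 * GB m x.2.2) := by
    rw [hT]
    refine (Finset.sum_filter_of_ne ?_).symm
    intro x _ hne
    constructor
    · by_contra hc
      exact hne (by rw [GB_eq_zero (by omega : m < x.2.1)]; ring)
    · by_contra hc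
      exact hne (by rw [GB_eq_zero (by omega : m < x.2.2)]; ring)
  rw [hfil]
  apply Finset.sum_nbij' (fun p => (⟨m - p.1 + p.2, (m - p.1, p.2)⟩ : Σ _ : ℕ, ℕ × ℕ))
    (fun x => (m - x.2.1, x.2.2))
  · rintro ⟨a, b⟩ hp
    simp only [Finset.mem_product, Finset.mem_range] at hp
    rw [hT, Finset.mem_filter]
    dsimp only
    refine ⟨Finset.mem_sigma.mpr ⟨Finset.mem_range.mpr (by dsimp only; omega), Finset.HasAntidiagonal.mem_antidiagonal.mpr (by dsimp only)⟩, by omega, by omega⟩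
  · rintro ⟨k, i, j⟩ hx
    rw [hT, Finset.mem_filter] at hx
    obtain ⟨hmem, hi, hj⟩ := hx
    have hk := Finset.HasAntidiagonal.mem_antidiagonal.mp (Finset.mem_sigma.mp hmem).2
    have hk2 := Finset.mem_range.mp (Finset.mem_sigma.mp hmem).1
    dsimp only at hk hk2 hi hj ⊢
    simp only [Finset.mem_product, Finset.mem_range]
    exact ⟨by omega, by omega⟩
  · rintro ⟨a, b⟩ hp
    simp only [Finset.mem_product, Finset.mem_range] at hp
    dsimp only
    have e : m - (m - a) = a := by omega
    rw [e]
  · rintro ⟨k, i, j⟩ hx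
    rw [hT, Finset.mem_filter] at hx
    obtain ⟨hmem, hi, hj⟩ := hx
    have hk := Finset.HasAntidiagonal.mem_antidiagonal.mp (Finset.mem_sigma.mp hmem).2
    dsimp only at hk hi hj ⊢
    have e1 : m - (m - i) = i := by omega
    simp only [e1, hk]
  · rintro ⟨a, b⟩ hp
    simp only [Finset.mem_product, Finset.mem_range] at hp
    obtain ⟨ha, hb⟩ := hp
    have ha' : a ≤ m := by omega
    have hb' : b ≤ m := by omega
    simp only
    have e1 : m - (m - a) = a := by omega
    rw [e1, ← GB_symm m a ha']
    -- sign
    have hsign : (-1 : PowerSeries ℤ)^(m - a + b + m) = (-1 : PowerSeries ℤ)^(a + b) := by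
      rw [neg_one_pow_eq_pow_mod_two, neg_one_pow_eq_pow_mod_two (a+b)]
      congr 1
      omega
    -- exponent
    have hexp : (m - a + b - m)^2 + (m - (m - a + b))^2 + 2*a*b = a^2 + b^2 := by
      rcases le_or_gt b a with h | h
      · obtain ⟨t, rfl⟩ := Nat.exists_eq_add_of_le h
        have e3 : m - (b + t) + b - m = 0 := by omega
        have e4 : m - (m - (b+t) + b) = t := by omega
        rw [e3, e4]; ring
      · obtain ⟨t, ht, rfl⟩ : ∃ t, 0 < t ∧ b = a + t := ⟨b - a, by omega, by omega⟩
        have e3 : m - a + (a + t) - m = t := by omega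
        have e4 : m - (m - a + (a + t)) = 0 := by omega
        rw [e3, e4]; ring
    calc (-1 : PowerSeries ℤ)^a * X^(a^2) * GB m a * ((-1 : PowerSeries ℤ)^b * X^(b^2) * GB m b)
        = (-1 : PowerSeries ℤ)^(a+b) * X^(a^2 + b^2) * (GB m a * GB m b) := by
          rw [pow_add, pow_add]; ring
      _ = (-1 : PowerSeries ℤ)^(m - a + b + m) * X^((m - a + b - m)^2 + (m - (m - a + b))^2 + 2*a*b) * (GB m a * GB m b) := by
          rw [hsign, hexp]
      _ = (-1 : PowerSeries ℤ)^(m - a + b + m) * X^((m - a + b - m)^2 + (m - (m - a + b))^2) *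
            (X^(2*a*b) * GB m a * GB m b) := by
          rw [pow_add]; ring

noncomputable def Dm (m : ℕ) : PowerSeries ℤ := ∏ i ∈ range m, (1 - X^(2*(i+1)))

lemma Dm_succ (m : ℕ) : Dm (m+1) = Dm m * (1 - X^(2*(m+1))) := Finset.prod_range_succ _ _

@[simp] lemma Dm_zero : Dm 0 = 1 := rfl

lemma constantCoeff_Dm (s : ℕ) : constantCoeff (Dm s) = 1 := by
  rw [Dm, map_prod]
  apply Finset.prod_eq_one
  intro i _
  rw [map_sub, map_one, map_pow, constantCoeff_X, zero_pow (by omega), sub_zero]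

lemma GB_mul_D : ∀ N K : ℕ, K ≤ N → GB N K * Dm K * Dm (N - K) = Dm N := by
  intro N
  induction N with
  | zero => intro K h; interval_cases K; simp
  | succ N ih =>
    intro K h
    rcases Nat.eq_zero_or_pos K with rfl | hK0
    · simp
    rcases Nat.eq_or_lt_of_le h with rfl | hlt
    · simp
    obtain ⟨k, rfl⟩ := Nat.exists_eq_succ_of_ne_zero (by omega : K ≠ 0)
    have hk : k + 1 ≤ N := by omega
    have hNk : N + 1 - (k+1) = (N - (k+1)) + 1 := by omega
    rw [GB_succ_succ, hNk, Dm_succ (N - (k+1)), Dm_succ k]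
    have e1 : 2*(N - (k+1) + 1) = 2*(N - k) := by omega
    rw [e1]
    have ih1 := ih k (by omega)
    have ih2 := ih (k+1) hk
    have hNk2 : N - k = (N - (k+1)) + 1 := by omega
    rw [hNk2, Dm_succ (N - (k+1)), e1] at ih1
    calc (GB N k + X ^ (2 * (k + 1)) * GB N (k + 1)) * (Dm k * (1 - X ^ (2 * (k + 1)))) *
          (Dm (N - (k + 1)) * (1 - X ^ (2 * (N - k))))
        = (GB N k * Dm k * (Dm (N - (k+1)) * (1 - X ^ (2 * (N - k))))) * (1 - X^(2*(k+1)))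
          + X^(2*(k+1)) * (GB N (k+1) * (Dm k * (1 - X^(2*(k+1)))) * Dm (N - (k+1)))
            * (1 - X^(2*(N-k))) := by ring
      _ = Dm N * (1 - X^(2*(k+1))) + X^(2*(k+1)) * Dm N * (1 - X^(2*(N-k))) := by
          rw [ih1]
          rw [show Dm k * (1 - X^(2*(k+1))) = Dm (k+1) from (Dm_succ k).symm, ih2]
      _ = Dm N * (1 - X^(2*(k+1)) * X^(2*(N-k))) := by ring
      _ = Dm N * (1 - X^(2*(N+1))) := by
          rw [← pow_add, show 2*(k+1) + 2*(N-k) = 2*(N+1) by omega]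
      _ = Dm (N+1) := (Dm_succ N).symm

lemma prod_one_dvd' (M : ℕ) (f : ℕ → PowerSeries ℤ) (S : Finset ℕ)
    (h : ∀ i ∈ S, (X : PowerSeries ℤ)^M ∣ (f i - 1)) :
    (X : PowerSeries ℤ)^M ∣ (∏ i ∈ S, f i) - 1 := by
  classical
  induction S using Finset.induction with
  | empty => simp
  | @insert a s hnot ih =>
    rw [Finset.prod_insert hnot]
    have h1 : (X : PowerSeries ℤ)^M ∣ (f a - 1) := h a (Finset.mem_insert_self a s)
    have h2 := ih (fun i hi => h i (Finset.mem_insert_of_mem hi))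
    have e : f a * ∏ i ∈ s, f i - 1 = f a * ((∏ i ∈ s, f i) - 1) + (f a - 1) := by ring
    rw [e]
    exact dvd_add (Dvd.dvd.mul_left h2 _) h1

lemma Dm_sub_dvd (c s : ℕ) (h : c ≤ s) : (X : PowerSeries ℤ)^(2*(c+1)) ∣ Dm s - Dm c := by
  obtain ⟨t, rfl⟩ := Nat.exists_eq_add_of_le h
  rw [Dm, Finset.prod_range_add, ← Dm]
  have : Dm c * ∏ i ∈ range t, (1 - X ^ (2 * (c + i + 1))) - Dm c
      = Dm c * ((∏ i ∈ range t, (1 - X ^ (2 * (c + i + 1)))) - 1) := by ring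
  rw [this]
  apply Dvd.dvd.mul_left
  apply prod_one_dvd'
  intro i _
  have e : (1 : PowerSeries ℤ) - X ^ (2 * (c + i + 1)) - 1 = -X^(2*(c+i+1)) := by ring
  rw [e]
  exact (pow_dvd_pow _ (by omega)).neg_right

lemma X_pow_dvd_of_mul (M : ℕ) (u v : PowerSeries ℤ) (hv : constantCoeff v = 1)
    (h : (X : PowerSeries ℤ)^M ∣ u * v) : (X : PowerSeries ℤ)^M ∣ u := by
  rw [X_pow_dvd_iff] at h ⊢
  intro n hn
  induction n using Nat.strong_induction_on with
  | _ n ihn =>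
    have h0 := h n hn
    rw [coeff_mul] at h0
    rw [Finset.sum_eq_single (n, 0)] at h0
    · simpa [hv, coeff_zero_eq_constantCoeff] using h0
    · rintro ⟨i, j⟩ hb hne
      have hij : i + j = n := Finset.HasAntidiagonal.mem_antidiagonal.mp hb
      have hi : i < n := by
        by_contra h'
        push_neg at h'
        have hin : i = n := by omega
        have hj0 : j = 0 := by omega
        subst hin; subst hj0
        exact hne rfl
      rw [ihn i hi (by omega)]
      ring
    · intro hmem
      exact absurd (Finset.HasAntidiagonal.mem_antidiagonal.mpr (by simp)) hmem

lemma GBD_congruence (m k : ℕ) (hk : k ≤ 2*m) :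
    (X : PowerSeries ℤ)^(2*(min k (2*m - k) + 1)) ∣ GB (2*m) k * Dm m - 1 := by
  set c := min k (2*m - k) with hc
  set M := 2*(c+1) with hM
  have hcm : c ≤ m := by omega
  have hck : c ≤ k := by omega
  have hck2 : c ≤ 2*m - k := by omega
  have hc2m : c ≤ 2*m := by omega
  obtain ⟨r1, hr1⟩ := Dm_sub_dvd c (2*m) hc2m
  obtain ⟨r2, hr2⟩ := Dm_sub_dvd c m hcm
  obtain ⟨r3, hr3⟩ := Dm_sub_dvd c k hck
  obtain ⟨r4, hr4⟩ := Dm_sub_dvd c (2*m - k) hck2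
  have hprod := GB_mul_D (2*m) k hk
  apply X_pow_dvd_of_mul M _ (Dm k * Dm (2*m - k))
  · rw [map_mul, constantCoeff_Dm, constantCoeff_Dm, one_mul]
  · have key : (GB (2*m) k * Dm m - 1) * (Dm k * Dm (2*m - k))
        = Dm m * (GB (2*m) k * Dm k * Dm (2*m - k)) - Dm k * Dm (2*m - k) := by ring
    rw [key, hprod]
    have e2 : Dm m = Dm c + X^M * r2 := by rw [← hr2]; ring
    have e1 : Dm (2*m) = Dm c + X^M * r1 := by rw [← hr1]; ring
    have e3 : Dm k = Dm c + X^M * r3 := by rw [← hr3]; ring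
    have e4 : Dm (2*m - k) = Dm c + X^M * r4 := by rw [← hr4]; ring
    rw [e1, e2, e3, e4]
    exact ⟨r2 * Dm c + Dm c * r1 + X^M * (r2 * r1) - (r3 * Dm c + Dm c * r4 + X^M * (r3 * r4)),
      by ring⟩

/-- coefficients of the theta series `∑ (-1)^r q^(r^2)`, `r ∈ ℤ`. -/
def gg : ℕ → ℤ := fun n =>
  if Nat.sqrt n ^ 2 = n then (if n = 0 then 1 else 2 * (-1)^(Nat.sqrt n)) else 0

lemma coeff_X_pow_mul' (u : PowerSeries ℤ) (e n : ℕ) :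
    coeff n (X^e * u) = if e ≤ n then coeff (n - e) u else 0 := by
  split_ifs with h
  · obtain ⟨d, rfl⟩ := Nat.exists_eq_add_of_le h
    rw [Nat.add_sub_cancel_left]
    have := PowerSeries.coeff_X_pow_mul u e d
    rw [Nat.add_comm] at this
    exact this
  · have hdvd : (X : PowerSeries ℤ)^(n+1) ∣ X^e * u :=
      Dvd.dvd.mul_right (pow_dvd_pow _ (by omega)) u
    rw [X_pow_dvd_iff] at hdvd
    exact hdvd n (by omega)

lemma coeff_Sm_Dm (n : ℕ) : coeff n (Sm (n+1) * Dm (n+1)) = gg n := by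
  classical
  set m := n + 1 with hm
  rw [Sm, Finset.sum_mul, map_sum]
  have term : ∀ k ∈ range (2*m+1),
      coeff n ((-1 : PowerSeries ℤ)^(k+m) * X^((k-m)^2 + (m-k)^2) * GB (2*m) k * Dm m)
      = (-1 : ℤ)^(k+m) * (if (k-m)^2 + (m-k)^2 = n then 1 else 0) := by
    intro k hk
    have hk2m : k ≤ 2*m := by simpa using Nat.lt_succ_iff.mp (Finset.mem_range.mp hk)
    set e := (k-m)^2 + (m-k)^2 with he
    have step1 : ((-1 : PowerSeries ℤ)^(k+m) * X^e * GB (2*m) k * Dm m)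
        = C ((-1 : ℤ)^(k+m)) * (X^e * (GB (2*m) k * Dm m)) := by
      rw [map_pow, map_neg, map_one]
      ring
    rw [step1, coeff_C_mul]
    congr 1
    rw [coeff_X_pow_mul']
    rcases le_or_gt e n with hle | hgt
    · rw [if_pos hle]
      have hcong := GBD_congruence m k hk2m
      have hbound : n - e < 2*(min k (2*m - k) + 1) := by
        rcases le_or_gt m k with hmk | hmk
        · obtain ⟨j, rfl⟩ := Nat.exists_eq_add_of_le hmk
          have e1 : m + j - m = j := by omega
          have e2 : m - (m + j) = 0 := by omega
          rw [e1, e2] at he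
          have hjj : j ≤ j * j + 1 := by nlinarith
          have he' : e = j * j := by rw [he]; ring
          have hmin : min (m+j) (2*m - (m+j)) = m - j := by omega
          rw [hmin]
          omega
        · have e1 : k - m = 0 := by omega
          rw [e1] at he
          have he' : e = (m-k) * (m-k) := by rw [he]; ring
          have hjj : (m-k) ≤ (m-k) * (m-k) + 1 := by nlinarith
          have hmin : min k (2*m - k) = k := by omega
          rw [hmin]
          omega
      have hc := coeff_eq_of_dvd hbound hcong
      rw [hc]
      rw [coeff_one]
      by_cases hen : e = n
      · rw [if_pos (by omega), if_pos hen]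
      · rw [if_neg (by omega), if_neg hen]
    · rw [if_neg (by omega), if_neg (by omega)]
  rw [Finset.sum_congr rfl term]
  by_cases hsq : Nat.sqrt n ^ 2 = n
  · by_cases hn0 : n = 0
    · subst hn0
      simp only [hm]
      norm_num [Finset.sum_range_succ, gg]
    · set r := Nat.sqrt n with hr
      have hrn : r^2 = n := hsq
      have hr1 : 1 ≤ r := by
        rcases Nat.eq_zero_or_pos r with h0 | h1
        · exfalso; rw [h0] at hrn; simp at hrn; omega
        · exact h1
      have hrle : r ≤ n := by nlinarith
      have hrm : r ≤ m := by omega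
      have hsub : ({m - r, m + r} : Finset ℕ) ⊆ range (2*m+1) := by
        intro x hx
        simp only [Finset.mem_insert, Finset.mem_singleton] at hx
        rcases hx with rfl | rfl <;> (rw [Finset.mem_range]; omega)
      have hzero : ∀ k ∈ range (2*m+1), k ∉ ({m - r, m + r} : Finset ℕ) →
          (-1 : ℤ)^(k+m) * (if (k-m)^2 + (m-k)^2 = n then 1 else 0) = 0 := by
        intro k _ hk
        simp only [Finset.mem_insert, Finset.mem_singleton] at hk
        push_neg at hk
        rw [if_neg, mul_zero]
        intro hekn
        rcases le_or_gt m k with hmk | hmk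
        · have e1 : m - k = 0 := by omega
          rw [e1] at hekn
          have : (k - m)^2 = n := by omega
          have : k - m = r := by
            rw [hr, ← this, Nat.sqrt_eq']
          omega
        · have e1 : k - m = 0 := by omega
          rw [e1] at hekn
          have : (m - k)^2 = n := by omega
          have : m - k = r := by
            rw [hr, ← this, Nat.sqrt_eq']
          omega
      rw [← Finset.sum_subset hsub hzero]
      rw [Finset.sum_pair (by omega : m - r ≠ m + r)]
      have e1 : m - r - m = 0 := by omega
      have e2 : m - (m - r) = r := by omega
      have e3 : m + r - m = r := by omega
      have e4 : m - (m + r) = 0 := by omega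
      rw [e1, e2, e3, e4]
      have hind : (0:ℕ)^2 + r^2 = n := by simpa using hrn
      have hind2 : r^2 + (0:ℕ)^2 = n := by simpa using hrn
      rw [if_pos hind, if_pos hind2]
      have hs1 : (-1 : ℤ)^(m - r + m) = (-1 : ℤ)^r := by
        rw [neg_one_pow_eq_pow_mod_two, neg_one_pow_eq_pow_mod_two r]
        congr 1
        omega
      have hs2 : (-1 : ℤ)^(m + r + m) = (-1 : ℤ)^r := by
        rw [neg_one_pow_eq_pow_mod_two, neg_one_pow_eq_pow_mod_two r]
        congr 1
        omega
      rw [hs1, hs2, gg, if_pos hsq, if_neg hn0, ← hr]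
      ring
  · rw [gg, if_neg hsq]
    apply Finset.sum_eq_zero
    intro k _
    rw [if_neg, mul_zero]
    intro hekn
    apply hsq
    rcases le_or_gt m k with hmk | hmk
    · have e1 : m - k = 0 := by omega
      rw [e1] at hekn
      have h2 : (k - m)^2 = n := by omega
      rw [← h2, Nat.sqrt_eq']
    · have e1 : k - m = 0 := by omega
      rw [e1] at hekn
      have h2 : (m - k)^2 = n := by omega
      rw [← h2, Nat.sqrt_eq']

/-! ### Part III: the series identities -/

noncomputable def Winf : PowerSeries ℤ := ∏' i : ℕ, (1 - (X : PowerSeries ℤ)^(2*i+1))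

noncomputable def phi : PowerSeries ℤ := PowerSeries.mk gg

lemma hfac (c : ℕ → ℕ) (hc : ∀ i, i + 1 ≤ c i) :
    ∀ i, (X : PowerSeries ℤ)^(i+1) ∣ ((1 - (X:PowerSeries ℤ)^(c i)) - 1) := by
  intro i
  have e : (1 : PowerSeries ℤ) - X^(c i) - 1 = -(X^(c i)) := by ring
  rw [e]
  exact (pow_dvd_pow _ (hc i)).neg_right

lemma hW (m : ℕ) : (X : PowerSeries ℤ)^m ∣ Winf - Wm m :=
  X_pow_dvd_tprod _ (hfac _ (fun i => by omega)) m

lemma hE2 (m : ℕ) : (X : PowerSeries ℤ)^m ∣ E 2 - Dm m :=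
  X_pow_dvd_tprod _ (hfac _ (fun i => by omega)) m

lemma prod_split (m : ℕ) :
    ∏ i ∈ range (2*m), (1 - (X:PowerSeries ℤ)^(i+1)) = Wm m * Dm m := by
  induction m with
  | zero => simp [Wm, Dm]
  | succ m ih =>
    have e : 2*(m+1) = (2*m + 1) + 1 := by omega
    rw [e, Finset.prod_range_succ, Finset.prod_range_succ, ih]
    conv_rhs => rw [Wm, Finset.prod_range_succ, ← Wm, Dm, Finset.prod_range_succ, ← Dm]
    have e1 : 2*m + 1 + 1 = 2*(m+1) := by omega
    rw [e1]
    ring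

lemma E1_eq : E 1 = Winf * E 2 := by
  ext n
  have h1 : ∀ i : ℕ, (X : PowerSeries ℤ)^(i+1) ∣ ((1 - (X:PowerSeries ℤ)^(1*(i+1))) - 1) :=
    hfac _ (fun i => by omega)
  rw [E, coeff_tprod_eq _ h1 n (2*(n+1)) (by omega)]
  have e : ∀ i ∈ range (2*(n+1)), (1 - (X:PowerSeries ℤ)^(1*(i+1))) = (1 - X^(i+1)) := by
    intro i _
    norm_num
  rw [Finset.prod_congr rfl e, prod_split (n+1)]
  exact (coeff_eq_of_dvd (by omega : n < n+1)
    (coeff_mul_congr (n+1) (hW (n+1)) (hE2 (n+1)))).symm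

lemma theta_eq : Winf * Winf * E 2 = phi := by
  ext n
  have step : coeff n (Winf * Winf * E 2) = coeff n (Wm (n+1) * Wm (n+1) * Dm (n+1)) :=
    coeff_eq_of_dvd (by omega : n < n+1)
      (coeff_mul_congr (n+1) (coeff_mul_congr (n+1) (hW (n+1)) (hW (n+1))) (hE2 (n+1)))
  rw [step, show Wm (n+1) * Wm (n+1) * Dm (n+1) = (Wm (n+1))^2 * Dm (n+1) from by ring,
    jtp (n+1), coeff_Sm_Dm n, phi, coeff_mk]

/-- the inverse of `1 - X^s` -/
noncomputable def Gs (s : ℕ) : PowerSeries ℤ :=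
  PowerSeries.mk (fun j => if s ∣ j then 1 else 0)

lemma Gs_inv (s : ℕ) (hs : 1 ≤ s) : (1 - (X:PowerSeries ℤ)^s) * Gs s = 1 := by
  ext n
  rw [sub_mul, one_mul, map_sub, coeff_X_pow_mul', Gs, coeff_mk, coeff_one]
  rcases Nat.eq_zero_or_pos n with rfl | hn
  · rw [if_pos (dvd_zero s), if_neg (by omega), if_pos rfl]
    ring
  · rw [if_neg (show ¬ n = 0 by omega)]
    by_cases h1 : s ∣ n
    · rw [if_pos h1, if_pos (Nat.le_of_dvd hn h1), coeff_mk,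
        if_pos (Nat.dvd_sub h1 dvd_rfl)]
      ring
    · rw [if_neg h1]
      rcases le_or_gt s n with hsn | hsn
      · rw [if_pos hsn, coeff_mk, if_neg (fun hc => h1 (by
          have e : n = (n - s) + s := by omega
          rw [e]; exact dvd_add hc dvd_rfl))]
        ring
      · rw [if_neg (by omega)]
        ring

noncomputable def UU (M : ℕ) : PowerSeries ℤ := ∏' i : ℕ, Gs (M * (i+1))

lemma hGs_fac (M : ℕ) (hM : 1 ≤ M) :
    ∀ i, (X : PowerSeries ℤ)^(i+1) ∣ (Gs (M*(i+1)) - 1) := by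
  intro i
  rw [X_pow_dvd_iff]
  intro j hj
  rw [map_sub, Gs, coeff_mk, coeff_one]
  rcases Nat.eq_zero_or_pos j with rfl | hjpos
  · rw [if_pos (dvd_zero _), if_pos rfl]; ring
  · rw [if_neg (show ¬ j = 0 by omega), if_neg ?_]
    · ring
    · intro hd
      have := Nat.le_of_dvd hjpos hd
      nlinarith

lemma hUU (M : ℕ) (hM : 1 ≤ M) (m : ℕ) :
    (X : PowerSeries ℤ)^m ∣ UU M - ∏ i ∈ range m, Gs (M*(i+1)) :=
  X_pow_dvd_tprod _ (hGs_fac M hM) m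

lemma hEM (M : ℕ) (hM : 1 ≤ M) (m : ℕ) :
    (X : PowerSeries ℤ)^m ∣ E M - ∏ i ∈ range m, (1 - (X:PowerSeries ℤ)^(M*(i+1))) := by
  apply X_pow_dvd_tprod
  apply hfac
  intro i
  nlinarith

lemma E_mul_UU (M : ℕ) (hM : 1 ≤ M) : E M * UU M = 1 := by
  ext n
  have step : coeff n (E M * UU M) =
      coeff n ((∏ i ∈ range (n+1), (1 - (X:PowerSeries ℤ)^(M*(i+1)))) *
        ∏ i ∈ range (n+1), Gs (M*(i+1))) :=
    coeff_eq_of_dvd (by omega : n < n+1)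
      (coeff_mul_congr (n+1) (hEM M hM (n+1)) (hUU M hM (n+1)))
  rw [step, ← Finset.prod_mul_distrib, Finset.prod_congr rfl
    (fun i _ => Gs_inv (M*(i+1)) (by nlinarith)), Finset.prod_const_one]

lemma coeff_prod_nonneg (F : ℕ → PowerSeries ℤ) (hF : ∀ i j, 0 ≤ coeff j (F i))
    (S : Finset ℕ) : ∀ l, 0 ≤ coeff l (∏ i ∈ S, F i) := by
  classical
  induction S using Finset.induction with
  | empty => intro l; rw [Finset.prod_empty, coeff_one]; split_ifs <;> norm_num
  | @insert a s hnot ih =>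
    intro l
    rw [Finset.prod_insert hnot, coeff_mul]
    apply Finset.sum_nonneg
    rintro ⟨i, j⟩ _
    exact mul_nonneg (hF a i) (ih j)

lemma coeff_prod_supp (M : ℕ) (F : ℕ → PowerSeries ℤ)
    (hF : ∀ i j, ¬ M ∣ j → coeff j (F i) = 0) (S : Finset ℕ) :
    ∀ l, ¬ M ∣ l → coeff l (∏ i ∈ S, F i) = 0 := by
  classical
  induction S using Finset.induction with
  | empty =>
    intro l hl
    rw [Finset.prod_empty, coeff_one, if_neg (by rintro rfl; exact hl (dvd_zero M))]
  | @insert a s hnot ih =>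
    intro l hl
    rw [Finset.prod_insert hnot, coeff_mul]
    apply Finset.sum_eq_zero
    rintro ⟨i, j⟩ hij
    have hijl : i + j = l := Finset.HasAntidiagonal.mem_antidiagonal.mp hij
    by_cases hi : M ∣ i
    · have hj : ¬ M ∣ j := by intro hj; exact hl (by rw [← hijl]; exact dvd_add hi hj)
      rw [ih j hj, mul_zero]
    · rw [hF a i hi, zero_mul]

lemma Gs_coeff_nonneg (s j : ℕ) : 0 ≤ coeff j (Gs s) := by
  rw [Gs, coeff_mk]; split_ifs <;> norm_num

lemma coeff_UU_nonneg (M : ℕ) (hM : 1 ≤ M) (l : ℕ) : 0 ≤ coeff l (UU M) := by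
  have := coeff_eq_of_dvd (by omega : l < l+1) (hUU M hM (l+1))
  rw [this]
  exact coeff_prod_nonneg _ (fun i j => Gs_coeff_nonneg _ _) _ l

lemma coeff_UU_supp (M : ℕ) (hM : 1 ≤ M) (l : ℕ) (h : ¬ M ∣ l) : coeff l (UU M) = 0 := by
  have := coeff_eq_of_dvd (by omega : l < l+1) (hUU M hM (l+1))
  rw [this]
  refine coeff_prod_supp M _ ?_ _ l h
  intro i j hj
  rw [Gs, coeff_mk, if_neg (fun hd => hj (dvd_trans (Dvd.intro _ rfl) hd))]

lemma coeff_UU_pos (M : ℕ) (hM : 1 ≤ M) (l : ℕ) (h : M ∣ l) : 0 < coeff l (UU M) := by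
  have heq := coeff_eq_of_dvd (by omega : l < l+1) (hUU M hM (l+1))
  rw [heq, Finset.prod_range_succ']
  rw [coeff_mul]
  have hmem : ((0 : ℕ), l) ∈ Finset.HasAntidiagonal.antidiagonal l := Finset.HasAntidiagonal.mem_antidiagonal.mpr (by simp)
  have hterm : (1 : ℤ) ≤ coeff 0 (∏ i ∈ range l, Gs (M * (i + 1 + 1))) * coeff l (Gs (M * 1)) := by
    have h0 : coeff 0 (∏ i ∈ range l, Gs (M * (i + 1 + 1))) = 1 := by
      rw [coeff_zero_eq_constantCoeff, map_prod]
      apply Finset.prod_eq_one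
      intro i _
      rw [Gs, ← coeff_zero_eq_constantCoeff, coeff_mk, if_pos (dvd_zero _)]
    have h1 : coeff l (Gs (M * 1)) = 1 := by
      rw [Gs, coeff_mk, if_pos (by simpa using h)]
    rw [h0, h1]; norm_num
  calc (0 : ℤ) < 1 := one_pos
    _ ≤ _ := hterm
    _ ≤ _ := Finset.single_le_sum (f := fun p : ℕ × ℕ =>
        coeff p.1 (∏ i ∈ range l, Gs (M * (i + 1 + 1))) * coeff p.2 (Gs (M * 1)))
        (fun p _ => mul_nonneg (coeff_prod_nonneg _ (fun i j => Gs_coeff_nonneg _ _) _ _)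
          (Gs_coeff_nonneg _ _)) hmem

/-! ### Part IV: the coefficient formula for `a` -/

lemma E2_ne_zero : E 2 ≠ 0 := by
  have h0 : coeff 0 (E 2) = 1 := by
    rw [E, coeff_tprod_eq _ (hfac _ (fun i => by omega)) 0 1 (by omega),
      Finset.prod_range_one, map_sub, coeff_one, if_pos rfl, coeff_X_pow, if_neg (by omega)]
    ring
  intro h
  rw [h, map_zero] at h0
  exact one_ne_zero h0.symm

lemma a_formula (p : ℕ) (hp1 : 1 ≤ p) (a : ℕ → ℤ)
    (ha : PowerSeries.mk a * (E 2 * E (4 * p)) = (E 1) ^ 2) :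
    ∀ n : ℕ, a n = ∑ j ∈ range (n+1), gg j * coeff (n-j) (UU (4*p)) := by
  have h2 : (E 1)^2 = phi * E 2 := by
    rw [E1_eq, ← theta_eq]; ring
  have h3 : (PowerSeries.mk a * E (4*p)) * E 2 = phi * E 2 := by
    rw [← h2, ← ha]; ring
  have h4 : PowerSeries.mk a * E (4*p) = phi := mul_right_cancel₀ E2_ne_zero h3
  have h5 : PowerSeries.mk a = phi * UU (4*p) := by
    calc PowerSeries.mk a = PowerSeries.mk a * (E (4*p) * UU (4*p)) := by
          rw [E_mul_UU _ (by omega), mul_one]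
      _ = (PowerSeries.mk a * E (4*p)) * UU (4*p) := by ring
      _ = phi * UU (4*p) := by rw [h4]
  intro n
  calc a n = coeff n (PowerSeries.mk a) := (coeff_mk n a).symm
    _ = coeff n (phi * UU (4*p)) := by rw [h5]
    _ = ∑ q ∈ Finset.HasAntidiagonal.antidiagonal n, coeff q.1 phi * coeff q.2 (UU (4*p)) := coeff_mul _ _ _
    _ = ∑ j ∈ range (n+1), gg j * coeff (n-j) (UU (4*p)) := by
        rw [Finset.Nat.sum_antidiagonal_eq_sum_range_succ
          (fun i j => coeff i phi * coeff j (UU (4*p)))]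
        apply Finset.sum_congr rfl
        intro j _
        rw [phi, coeff_mk]

/-! ### Part V: modular arithmetic helpers -/

lemma mod4_of (p n j : ℕ) (hj : j ≤ n) (hd : 4*p ∣ n - j) : n % 4 = j % 4 := by
  obtain ⟨c, hc⟩ := hd
  have h4 : n - j = 4*(p*c) := by rw [hc]; ring
  omega

lemma odd_sq_mod4 (r : ℕ) (hr : r % 2 = 1) : r^2 % 4 = 1 := by
  obtain ⟨u, hu⟩ : ∃ u, r = 2*u+1 := ⟨r/2, by omega⟩
  have : r^2 = 4*(u*u+u)+1 := by subst hu; ring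
  omega

lemma even_sq_mod4 (r : ℕ) (hr : r % 2 = 0) : r^2 % 4 = 0 := by
  obtain ⟨u, hu⟩ : ∃ u, r = 2*u := ⟨r/2, by omega⟩
  have : r^2 = 4*(u*u) := by subst hu; ring
  omega

lemma nat_mod4_eq (n r p : ℕ) (h : ((r:ℤ)^2) % (4*(p:ℤ)) = (n:ℤ) % (4*(p:ℤ))) :
    n % 4 = r^2 % 4 := by
  have h4 : (4:ℤ) ∣ 4*(p:ℤ) := ⟨(p:ℤ), rfl⟩
  have hm : ((r:ℤ)^2) % 4 = (n:ℤ) % 4 := Int.ModEq.of_dvd h4 h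
  have hc : (((r^2 : ℕ)):ℤ) % 4 = (n:ℤ) % 4 := by push_cast; exact_mod_cast hm
  omega

lemma mod_p_modEq (s p : ℕ) (hp1 : 1 ≤ p) :
    ((s : ℤ)) ≡ ((s % p : ℕ) : ℤ) [ZMOD (p:ℤ)] := by
  show (s:ℤ) % (p:ℤ) = ((s % p : ℕ) : ℤ) % (p:ℤ)
  push_cast
  rw [Int.emod_emod_of_dvd _ dvd_rfl]

lemma square_to_t_even (p : ℕ) (hp1 : 1 ≤ p) (s : ℕ) :
    ∃ t : ℕ, t < p ∧ (((2*s : ℕ)):ℤ)^2 ≡ 4*((t:ℕ):ℤ)^2 [ZMOD (4*(p:ℤ))] := by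
  refine ⟨s % p, Nat.mod_lt s (by omega), ?_⟩
  have hst := mod_p_modEq s p hp1
  have h2 : (s:ℤ)^2 ≡ ((s % p : ℕ):ℤ)^2 [ZMOD (p:ℤ)] := hst.pow 2
  have h3 : 4*(s:ℤ)^2 ≡ 4*((s % p : ℕ):ℤ)^2 [ZMOD 4*(p:ℤ)] := h2.mul_left'
  have he : (((2*s : ℕ)):ℤ)^2 = 4*(s:ℤ)^2 := by push_cast; ring
  rw [he]
  exact h3

lemma square_to_t_odd (p : ℕ) (hp1 : 1 ≤ p) (s : ℕ) :
    ∃ t : ℕ, t < p ∧ (((2*s+1 : ℕ)):ℤ)^2 ≡ 4*((t:ℕ):ℤ)^2 + 4*((t:ℕ):ℤ) + 1 [ZMOD (4*(p:ℤ))] := by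
  refine ⟨s % p, Nat.mod_lt s (by omega), ?_⟩
  have hst := mod_p_modEq s p hp1
  have h2 : (s:ℤ)^2 + s ≡ ((s % p : ℕ):ℤ)^2 + ((s % p : ℕ):ℤ) [ZMOD (p:ℤ)] :=
    (hst.pow 2).add hst
  have h3 : 4*((s:ℤ)^2 + s) ≡ 4*(((s % p : ℕ):ℤ)^2 + ((s % p : ℕ):ℤ)) [ZMOD 4*(p:ℤ)] :=
    h2.mul_left'
  have h4 := h3.add_right 1
  have he : (((2*s+1 : ℕ)):ℤ)^2 = 4*((s:ℤ)^2 + s) + 1 := by push_cast; ring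
  have he2 : 4*((s % p : ℕ):ℤ)^2 + 4*((s % p : ℕ):ℤ) + 1
      = 4*(((s % p : ℕ):ℤ)^2 + ((s % p : ℕ):ℤ)) + 1 := by ring
  rw [he, he2]
  exact h4

lemma exists_rep (p : ℕ) (hp1 : 1 ≤ p) (N : ℤ)
    (hN : N = sSup {m : ℤ | ∃ r₀ < 4 * p, m =
        sInf {k : ℤ | ∃ r < 4 * p, k = (r : ℤ) ^ 2 ∧
          ((r : ℤ) ^ 2) % (4 * p) = ((r₀ : ℤ) ^ 2) % (4 * p)}} - 4 * p)
    (n : ℕ) (hn : N < n) (r₀ : ℕ) (hr₀ : r₀ < 4 * p)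
    (hc : ((r₀:ℤ)^2) % (4*(p:ℤ)) = (n:ℤ) % (4*(p:ℤ))) :
    ∃ r : ℕ, r < 4*p ∧ (r:ℤ)^2 ≤ (n:ℤ) ∧ ((r:ℤ)^2) % (4*(p:ℤ)) = (n:ℤ) % (4*(p:ℤ)) := by
  classical
  set S : ℕ → Set ℤ := fun r₀' => {k : ℤ | ∃ r < 4 * p, k = (r : ℤ) ^ 2 ∧
      ((r : ℤ) ^ 2) % (4 * p) = ((r₀' : ℤ) ^ 2) % (4 * p)} with hSdef
  have hSne : ∀ r₀' : ℕ, r₀' < 4*p → (S r₀').Nonempty :=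
    fun r₀' h => ⟨(r₀':ℤ)^2, r₀', h, rfl, rfl⟩
  have hSbd : ∀ r₀' : ℕ, BddBelow (S r₀') := by
    intro r₀'
    refine ⟨0, ?_⟩
    rintro k ⟨r, _, rfl, _⟩
    positivity
  have hmem := Int.csInf_mem (hSne r₀ hr₀) (hSbd r₀)
  obtain ⟨r₁, hr₁lt, hr₁eq, hr₁c⟩ := hmem
  have hObd : BddAbove {m : ℤ | ∃ r₀' < 4 * p, m = sInf (S r₀')} := by
    refine ⟨((4*p : ℕ):ℤ)^2, ?_⟩
    rintro m ⟨r₀', hr₀', rfl⟩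
    have h1 : sInf (S r₀') ≤ ((r₀':ℤ))^2 := csInf_le (hSbd r₀') ⟨r₀', hr₀', rfl, rfl⟩
    have h2 : ((r₀':ℤ))^2 ≤ ((4*p : ℕ):ℤ)^2 := by
      have : (r₀' : ℤ) ≤ ((4*p : ℕ) : ℤ) := by exact_mod_cast hr₀'.le
      have h0 : (0:ℤ) ≤ (r₀' : ℤ) := by positivity
      nlinarith
    linarith
  have hmemO : sInf (S r₀) ∈ {m : ℤ | ∃ r₀' < 4 * p, m = sInf (S r₀')} := ⟨r₀, hr₀, rfl⟩
  have hle := le_csSup hObd hmemO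
  have hNineq : (r₁:ℤ)^2 - 4*p ≤ N := by
    rw [hN, ← hr₁eq]
    have : ({m : ℤ | ∃ r₀ < 4 * p, m =
        sInf {k : ℤ | ∃ r < 4 * p, k = (r : ℤ) ^ 2 ∧
          ((r : ℤ) ^ 2) % (4 * p) = ((r₀ : ℤ) ^ 2) % (4 * p)}}) =
        {m : ℤ | ∃ r₀' < 4 * p, m = sInf (S r₀')} := rfl
    rw [this]
    linarith
  -- n ≡ r₁² mod 4p and n > r₁² - 4p  ⇒  r₁² ≤ n
  have hmod : ((r₁:ℤ)^2) % (4*(p:ℤ)) = (n:ℤ) % (4*(p:ℤ)) := hr₁c.trans hc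
  have hdvd : (4*(p:ℤ)) ∣ ((n:ℤ) - (r₁:ℤ)^2) := Int.ModEq.dvd hmod
  obtain ⟨c, hc2⟩ := hdvd
  have hMz : (0:ℤ) < 4*(p:ℤ) := by positivity
  have hngt : (r₁:ℤ)^2 - 4*p < n := by
    calc (r₁:ℤ)^2 - 4*p ≤ N := hNineq
      _ < n := hn
  have hcge : 0 ≤ c := by
    by_contra hcneg
    push_neg at hcneg
    have hle1 : c ≤ -1 := by omega
    have h6 : (4*(p:ℤ)) * c ≤ (4*(p:ℤ)) * (-1) := by
      apply mul_le_mul_of_nonneg_left hle1 hMz.le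
    rw [← hc2] at h6
    have : (4:ℤ)*(p:ℤ)*(-1) = -(4*(p:ℤ)) := by ring
    omega
  have hfin : (r₁:ℤ)^2 ≤ (n:ℤ) := by nlinarith
  exact ⟨r₁, hr₁lt, hfin, hmod⟩


/-- Sign-pattern of the coefficients of `(q;q)_∞^2 / ((q^2;q^2)_∞ (q^{4p};q^{4p})_∞)`
for `p = 1` or `p` an odd prime. -/
theorem sign_pattern_E1_sq_div_E2_E4p
    (p : ℕ) (hp : p = 1 ∨ (p.Prime ∧ Odd p))
    (a : ℕ → ℤ) (ha : PowerSeries.mk a * (E 2 * E (4 * p)) = (E 1) ^ 2)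
    (N : ℤ)
    (hN : N = sSup {m : ℤ | ∃ r₀ < 4 * p, m =
        sInf {k : ℤ | ∃ r < 4 * p, k = (r : ℤ) ^ 2 ∧
          ((r : ℤ) ^ 2) % (4 * p) = ((r₀ : ℤ) ^ 2) % (4 * p)}} - 4 * p) :
    ∀ n : ℕ, N < n →
      ((∃ t < p, (n : ℤ) ≡ 4 * (t : ℤ) ^ 2 + 4 * t + 1 [ZMOD (4 * p : ℤ)]) → a n < 0) ∧
      ((∃ t < p, (n : ℤ) ≡ 4 * (t : ℤ) ^ 2 [ZMOD (4 * p : ℤ)]) → 0 < a n) ∧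
      (((∀ t < p, ¬ (n : ℤ) ≡ 4 * (t : ℤ) ^ 2 + 4 * t + 1 [ZMOD (4 * p : ℤ)]) ∧
        (∀ t < p, ¬ (n : ℤ) ≡ 4 * (t : ℤ) ^ 2 [ZMOD (4 * p : ℤ)])) → a n = 0) := by
  have hp1 : 1 ≤ p := by
    rcases hp with rfl | ⟨hpp, _⟩
    · omega
    · exact hpp.pos
  have hM1 : 1 ≤ 4*p := by omega
  have haf := a_formula p hp1 a ha
  intro n hn
  refine ⟨?_, ?_, ?_⟩
  · -- negative case : n ≡ odd square
    rintro ⟨t, htp, hcong⟩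
    have hr₀lt : 2*t+1 < 4*p := by omega
    have hsq : (((2*t+1 : ℕ)):ℤ)^2 = 4*(t:ℤ)^2+4*(t:ℤ)+1 := by push_cast; ring
    have hc : (((2*t+1:ℕ)):ℤ)^2 % (4*(p:ℤ)) = (n:ℤ) % (4*(p:ℤ)) := by
      rw [hsq]; exact hcong.symm
    obtain ⟨r₁, hr₁lt, hr₁le, hr₁c⟩ := exists_rep p hp1 N hN n hn (2*t+1) hr₀lt hc
    have hn4 : n % 4 = (2*t+1)^2 % 4 := nat_mod4_eq n (2*t+1) p hc
    have h41 : n % 4 = 1 := by rw [hn4, odd_sq_mod4 _ (by omega)]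
    rw [haf n]
    have hneg : ∀ j ∈ range (n+1), gg j * coeff (n-j) (UU (4*p)) ≤ (fun _ => (0:ℤ)) j := by
      intro j hj
      have hjn : j ≤ n := by simpa using Nat.lt_succ_iff.mp (Finset.mem_range.mp hj)
      by_cases hs : Nat.sqrt j ^ 2 = j
      · by_cases hd : 4*p ∣ (n - j)
        · have hj4 : n % 4 = j % 4 := mod4_of p n j hjn hd
          set r := Nat.sqrt j with hr
          have hrodd : r % 2 = 1 := by
            rcases Nat.even_or_odd r with he | ho
            · exfalso
              have := even_sq_mod4 r (Nat.even_iff.mp he)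
              rw [hs] at this
              omega
            · exact Nat.odd_iff.mp ho
          have hj0 : j ≠ 0 := by
            intro h0
            rw [h0] at hj4
            omega
          have hggj : gg j = -2 := by
            rw [gg, if_pos hs, if_neg hj0, ← hr]
            have : (-1:ℤ)^r = -1 := Odd.neg_one_pow (Nat.odd_iff.mpr hrodd)
            rw [this]; ring
          rw [hggj]
          have hb := coeff_UU_nonneg (4*p) hM1 (n-j)
          simp only
          linarith
        · rw [coeff_UU_supp (4*p) hM1 (n-j) hd, mul_zero]
      · rw [gg, if_neg hs, zero_mul]
    have hex : ∃ j ∈ range (n+1), gg j * coeff (n-j) (UU (4*p)) < (fun _ => (0:ℤ)) j := by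
      refine ⟨r₁^2, ?_, ?_⟩
      · rw [Finset.mem_range]
        have : (r₁:ℤ)^2 = ((r₁^2 : ℕ) : ℤ) := by push_cast; ring
        rw [this] at hr₁le
        have := Int.ofNat_le.mp hr₁le
        omega
      · have hjn : r₁^2 ≤ n := by
          have : (r₁:ℤ)^2 = ((r₁^2 : ℕ) : ℤ) := by push_cast; ring
          rw [this] at hr₁le
          exact_mod_cast hr₁le
        have hdZ : (4*(p:ℤ)) ∣ ((n:ℤ) - (r₁:ℤ)^2) := Int.ModEq.dvd hr₁c
        have hdN : (4*p : ℕ) ∣ (n - r₁^2) := by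
          have he : ((n - r₁^2 : ℕ) : ℤ) = (n:ℤ) - (r₁:ℤ)^2 := by
            push_cast [hjn]
            ring
          have : ((4*p : ℕ) : ℤ) ∣ ((n - r₁^2 : ℕ) : ℤ) := by
            rw [he]
            exact_mod_cast hdZ
          exact_mod_cast this
        have hj4 : n % 4 = r₁^2 % 4 := mod4_of p n (r₁^2) hjn hdN
        have hrodd : r₁ % 2 = 1 := by
          rcases Nat.even_or_odd r₁ with he | ho
          · exfalso
            have := even_sq_mod4 r₁ (Nat.even_iff.mp he)
            omega
          · exact Nat.odd_iff.mp ho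
        have hj0 : r₁^2 ≠ 0 := by
          intro h0
          have : r₁ = 0 := by nlinarith [Nat.pos_of_ne_zero (fun hh => by omega : r₁ ≠ 0)]
          omega
        have hggj : gg (r₁^2) = -2 := by
          rw [gg, Nat.sqrt_eq', if_pos rfl, if_neg hj0]
          have : (-1:ℤ)^r₁ = -1 := Odd.neg_one_pow (Nat.odd_iff.mpr hrodd)
          rw [this]; ring
        have hbpos := coeff_UU_pos (4*p) hM1 (n - r₁^2) hdN
        rw [hggj]
        simp only
        linarith
    have := Finset.sum_lt_sum hneg hex
    simpa using this
  · -- positive case : n ≡ even square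
    rintro ⟨t, htp, hcong⟩
    have hr₀lt : 2*t < 4*p := by omega
    have hsq : (((2*t : ℕ)):ℤ)^2 = 4*(t:ℤ)^2 := by push_cast; ring
    have hc : (((2*t:ℕ)):ℤ)^2 % (4*(p:ℤ)) = (n:ℤ) % (4*(p:ℤ)) := by
      rw [hsq]; exact hcong.symm
    obtain ⟨r₁, hr₁lt, hr₁le, hr₁c⟩ := exists_rep p hp1 N hN n hn (2*t) hr₀lt hc
    have hn4 : n % 4 = (2*t)^2 % 4 := nat_mod4_eq n (2*t) p hc
    have h40 : n % 4 = 0 := by rw [hn4, even_sq_mod4 _ (by omega)]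
    rw [haf n]
    have hpos : ∀ j ∈ range (n+1), (fun _ => (0:ℤ)) j ≤ gg j * coeff (n-j) (UU (4*p)) := by
      intro j hj
      have hjn : j ≤ n := by simpa using Nat.lt_succ_iff.mp (Finset.mem_range.mp hj)
      by_cases hs : Nat.sqrt j ^ 2 = j
      · by_cases hd : 4*p ∣ (n - j)
        · have hj4 : n % 4 = j % 4 := mod4_of p n j hjn hd
          set r := Nat.sqrt j with hr
          have hreven : r % 2 = 0 := by
            rcases Nat.even_or_odd r with he | ho
            · exact Nat.even_iff.mp he
            · exfalso
              have := odd_sq_mod4 r (Nat.odd_iff.mp ho)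
              rw [hs] at this
              omega
          have hggj : 0 < gg j := by
            rw [gg, if_pos hs]
            by_cases hj0 : j = 0
            · rw [if_pos hj0]; norm_num
            · rw [if_neg hj0, ← hr]
              have : (-1:ℤ)^r = 1 := Even.neg_one_pow (Nat.even_iff.mpr hreven)
              rw [this]; norm_num
          have hb := coeff_UU_nonneg (4*p) hM1 (n-j)
          simp only
          positivity
        · rw [coeff_UU_supp (4*p) hM1 (n-j) hd, mul_zero]
      · rw [gg, if_neg hs, zero_mul]
    have hex : ∃ j ∈ range (n+1), (fun _ => (0:ℤ)) j < gg j * coeff (n-j) (UU (4*p)) := by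
      refine ⟨r₁^2, ?_, ?_⟩
      · rw [Finset.mem_range]
        have : (r₁:ℤ)^2 = ((r₁^2 : ℕ) : ℤ) := by push_cast; ring
        rw [this] at hr₁le
        have := Int.ofNat_le.mp hr₁le
        omega
      · have hjn : r₁^2 ≤ n := by
          have : (r₁:ℤ)^2 = ((r₁^2 : ℕ) : ℤ) := by push_cast; ring
          rw [this] at hr₁le
          exact_mod_cast hr₁le
        have hdZ : (4*(p:ℤ)) ∣ ((n:ℤ) - (r₁:ℤ)^2) := Int.ModEq.dvd hr₁c
        have hdN : (4*p : ℕ) ∣ (n - r₁^2) := by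
          have he : ((n - r₁^2 : ℕ) : ℤ) = (n:ℤ) - (r₁:ℤ)^2 := by
            push_cast [hjn]
            ring
          have : ((4*p : ℕ) : ℤ) ∣ ((n - r₁^2 : ℕ) : ℤ) := by
            rw [he]
            exact_mod_cast hdZ
          exact_mod_cast this
        have hggj : 0 < gg (r₁^2) := by
          rw [gg, Nat.sqrt_eq', if_pos rfl]
          by_cases hj0 : r₁^2 = 0
          · rw [if_pos hj0]; norm_num
          · rw [if_neg hj0]
            have hj4 : n % 4 = r₁^2 % 4 := mod4_of p n (r₁^2) hjn hdN
            have hreven : r₁ % 2 = 0 := by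
              rcases Nat.even_or_odd r₁ with he | ho
              · exact Nat.even_iff.mp he
              · exfalso
                have := odd_sq_mod4 r₁ (Nat.odd_iff.mp ho)
                omega
            have : (-1:ℤ)^r₁ = 1 := Even.neg_one_pow (Nat.even_iff.mpr hreven)
            rw [this]; norm_num
        have hbpos := coeff_UU_pos (4*p) hM1 (n - r₁^2) hdN
        simp only
        positivity
    have := Finset.sum_lt_sum hpos hex
    simpa using this
  · -- zero case
    rintro ⟨hodd, heven⟩
    rw [haf n]
    apply Finset.sum_eq_zero
    intro j hj
    have hjn : j ≤ n := by simpa using Nat.lt_succ_iff.mp (Finset.mem_range.mp hj)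
    by_cases hs : Nat.sqrt j ^ 2 = j
    · by_cases hd : 4*p ∣ (n - j)
      · exfalso
        set r := Nat.sqrt j with hr
        -- n ≡ r² [ZMOD 4p]
        have hdZ : (4*(p:ℤ)) ∣ ((n:ℤ) - (j:ℤ)) := by
          have he : ((n - j : ℕ) : ℤ) = (n:ℤ) - (j:ℤ) := by push_cast [hjn]; ring
          rw [← he]
          exact_mod_cast (by exact_mod_cast hd : ((4*p:ℕ):ℤ) ∣ ((n - j : ℕ):ℤ))
        have hnj : (n:ℤ) ≡ (r:ℤ)^2 [ZMOD (4*(p:ℤ))] := by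
          rw [Int.modEq_iff_dvd]
          have : (r:ℤ)^2 = (j:ℤ) := by exact_mod_cast congrArg (Nat.cast : ℕ → ℤ) hs
          rw [this, show (j:ℤ) - (n:ℤ) = -((n:ℤ) - (j:ℤ)) by ring]
          exact dvd_neg.mpr hdZ
        rcases Nat.even_or_odd r with he | ho
        · obtain ⟨s, hsr⟩ := he
          have hr2s : r = 2*s := by omega
          obtain ⟨t, htp, hmod⟩ := square_to_t_even p hp1 s
          rw [← hr2s] at hmod
          exact heven t htp (hnj.trans hmod)
        · obtain ⟨s, hsr⟩ := ho
          have hr2s : r = 2*s+1 := by omega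
          obtain ⟨t, htp, hmod⟩ := square_to_t_odd p hp1 s
          rw [← hr2s] at hmod
          exact hodd t htp (hnj.trans hmod)
      · rw [coeff_UU_supp (4*p) hM1 (n-j) hd, mul_zero]
    · rw [gg, if_neg hs, zero_mul]
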